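/- Let (A, m) be an Artinian Gorenstein local ring with Dilworth number d(A). If a is an ideal of A with μ(a) = d(A), then τ(m a) = d(A). -/

import Mathlib

open scoped Classical in
/-- `dim_{A/m} (a/b)`: the dimension over the residue field `A/m` of the subquotient `a/b`
(realized as the image of the ideal `a` in `A/b`), for ideals `b ⊆ a` with `m·a ⊆ b`; junk
value `0` if `a/b` is not killed by `m`. -/
noncomputable def resQuotDim {A : Type*} [CommRing A] (m a b : Ideal A) : ℕ :=
  if h : Module.IsTorsionBySet A
      ↥(Submodule.restrictScalars A (a.map (Ideal.Quotient.mk b))) (m : Set A) then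
    letI := h.module
    Module.finrank (A ⧸ m) ↥(Submodule.restrictScalars A (a.map (Ideal.Quotient.mk b)))
  else 0

/-- `μ(a) = dim_{A/m} a/ma`, the minimal number of generators of the ideal `a`. -/
noncomputable def muL {A : Type*} [CommRing A] (m a : Ideal A) : ℕ :=
  resQuotDim m a (m * a)

/-- `τ(a) = dim_{A/m} (a :_A m)/a`, the type of the ideal `a`. -/
noncomputable def tauL {A : Type*} [CommRing A] (m a : Ideal A) : ℕ :=
  resQuotDim m (a.colon m) a

/-! Since `a ≤ (m a : m)`, the socle `(m a : m)/m a` contains `a/m a`, so `μ(a) ≤ τ(m a)`.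
Conversely `m (m a : m) ≤ m a`, so `(m a : m)/m a` is a quotient of `(m a : m)/m (m a : m)`
and `τ(m a) ≤ μ(m a : m) ≤ d(A)`. The `A/m`-dimensions are compared as `A`-lengths, which are
monotone under injections and surjections. -/

open Module

theorem Module.IsTorsionBySet.finrank_eq_length {A M : Type*} [CommRing A] [AddCommGroup M]
    [Module A M] [IsNoetherian A M] {m : Ideal A} [m.IsMaximal]
    (h : IsTorsionBySet A M (m : Set A)) :
    letI := h.module
    (finrank (A ⧸ m) M : ℕ∞) = length A M := by
  let := h.module
  let : Field (A ⧸ m) := Ideal.Quotient.field m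
  have : IsNoetherian (A ⧸ m) M := isNoetherian_of_tower A ‹_›
  rw [← length_eq_finrank,
    length_eq_of_surjective (S := A) (R := A ⧸ m) Ideal.Quotient.mk_surjective]

namespace Ideal

variable {A : Type*} [CommRing A]

theorem mul_colon_le (I J : Ideal A) : J * I.colon J ≤ I :=
  mul_le.mpr fun r hr s hs => mul_comm r s ▸ Submodule.mem_colon.mp hs r hr

theorem le_colon_mul (I J : Ideal A) : I ≤ (J * I).colon J :=
  fun r hr => Submodule.mem_colon.mpr fun s hs => by
    rw [smul_eq_mul, mul_comm r s]
    exact mul_mem_mul hs hr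

theorem isTorsionBySet_map_mk_of_mul_le {m c b : Ideal A} (h : m * c ≤ b) :
    IsTorsionBySet A ((c.map (Quotient.mk b)).restrictScalars A) (m : Set A) := by
  rintro ⟨_, hx⟩ ⟨r, hr⟩
  obtain ⟨y, hy, rfl⟩ := (mem_map_iff_of_surjective _ Quotient.mk_surjective).mp hx
  exact Subtype.ext <| Quotient.eq_zero_iff_mem.mpr (h (mul_mem_mul hr hy))

end Ideal

section resQuotDim

variable {A : Type*} [CommRing A] [IsNoetherianRing A] {m c c' b b' : Ideal A} [m.IsMaximal]

theorem resQuotDim_eq_length (h : m * c ≤ b) :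
    (resQuotDim m c b : ℕ∞) = length A ((c.map (Ideal.Quotient.mk b)).restrictScalars A) := by
  rw [resQuotDim, dif_pos (Ideal.isTorsionBySet_map_mk_of_mul_le h),
    (Ideal.isTorsionBySet_map_mk_of_mul_le h).finrank_eq_length]

theorem resQuotDim_mono_left (hc : c ≤ c') (h : m * c' ≤ b) :
    resQuotDim m c b ≤ resQuotDim m c' b := by
  rw [← Nat.cast_le (α := ℕ∞), resQuotDim_eq_length ((Ideal.mul_mono_right hc).trans h),
    resQuotDim_eq_length h]
  exact length_le_of_injective _ (Submodule.inclusion_injective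
    (Submodule.restrictScalars_mono A (Ideal.map_mono hc)))

theorem resQuotDim_anti_right (hb : b ≤ b') (h : m * c ≤ b) :
    resQuotDim m c b' ≤ resQuotDim m c b := by
  rw [← Nat.cast_le (α := ℕ∞), resQuotDim_eq_length h, resQuotDim_eq_length (h.trans hb)]
  refine length_le_of_surjective
    ((Ideal.Quotient.factorₐ A hb).toLinearMap.restrict fun x hx => ?_) ?_
  · obtain ⟨y, hy, rfl⟩ :=
      (Ideal.mem_map_iff_of_surjective _ Ideal.Quotient.mk_surjective).mp hx
    exact Ideal.mem_map_of_mem _ hy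
  · rintro ⟨_, hx⟩
    obtain ⟨y, hy, rfl⟩ :=
      (Ideal.mem_map_iff_of_surjective _ Ideal.Quotient.mk_surjective).mp hx
    exact ⟨⟨Ideal.Quotient.mk b y, Ideal.mem_map_of_mem _ hy⟩, rfl⟩

end resQuotDim

theorem tau_mul_maximalIdeal_of_mu_eq_dilworth_general
    {A : Type*} [CommRing A] [IsArtinianRing A] [IsLocalRing A]
    (m : Ideal A) (hm : m = IsLocalRing.maximalIdeal A)
    (d : ℕ) (hd : IsGreatest {e : ℕ | ∃ a : Ideal A, muL m a = e} d)
    (a : Ideal A) (ha : muL m a = d) :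
    tauL m (m * a) = d := by
  have : m.IsMaximal := hm ▸ IsLocalRing.maximalIdeal.isMaximal A
  refine le_antisymm ?_ ?_
  · calc tauL m (m * a) ≤ muL m ((m * a).colon m) :=
          resQuotDim_anti_right (Ideal.mul_colon_le _ _) le_rfl
      _ ≤ d := hd.2 ⟨_, rfl⟩
  · calc d = muL m a := ha.symm
      _ ≤ tauL m (m * a) :=
          resQuotDim_mono_left (Ideal.le_colon_mul a m) (Ideal.mul_colon_le _ _)

/-- **(Ikeda–Watanabe.)**  Let `(A, m)` be an Artinian Gorenstein local ring (i.e.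
`dim_{A/m} (0 :_A m) = 1`) with Dilworth number `d(A) = max{μ(a)}`.  If `μ(a) = d(A)` then
`τ(m a) = d(A)`. -/
theorem tau_mul_maximalIdeal_of_mu_eq_dilworth
    {A : Type*} [CommRing A] [IsArtinianRing A] [IsLocalRing A]
    (m : Ideal A) (hm : m = IsLocalRing.maximalIdeal A)
    (hGor : tauL m (⊥ : Ideal A) = 1)
    (d : ℕ) (hd : IsGreatest {e : ℕ | ∃ a : Ideal A, muL m a = e} d)
    (a : Ideal A) (ha : muL m a = d) :
    tauL m (m * a) = d :=
  tau_mul_maximalIdeal_of_mu_eq_dilworth_general m hm d hd a ha
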